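/- arXiv:2103.05306 — 12 statements merged into one kernel-verified Lean document; each statement's English description precedes it below -/
import Mathlib

section
/- For integers x > y ≥ 1, with r = ⌊log₁₀(x+1)⌋ and s = ⌊log₁₀(y+1)⌋, the equation (y+1)·(10^(r+1)·y + x + 1) = (x+1)·(10^(s+1)·x + y + 1) holds if and only if x(x+1) = 10y(y+1) and r = s+1. -/
set_option maxHeartbeats 1000000 in
theorem stmt0 (x y : ℕ) (hxy : x > y) (hy : 1 ≤ y)
    (r s : ℕ) (hr : r = Nat.log 10 (x + 1)) (hs : s = Nat.log 10 (y + 1)) :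
    (y + 1) * (10 ^ (r + 1) * y + x + 1) = (x + 1) * (10 ^ (s + 1) * x + y + 1) ↔
      x * (x + 1) = 10 * (y * (y + 1)) ∧ r = s + 1 := by
  have hx1 : 10 ^ r ≤ x + 1 := by rw [hr]; exact Nat.pow_log_le_self 10 (by omega)
  have hx2 : x + 1 < 10 ^ (r + 1) := by rw [hr]; exact Nat.lt_pow_succ_log_self (by norm_num) _
  have hy1 : 10 ^ s ≤ y + 1 := by rw [hs]; exact Nat.pow_log_le_self 10 (by omega)
  have hy2 : y + 1 < 10 ^ (s + 1) := by rw [hs]; exact Nat.lt_pow_succ_log_self (by norm_num) _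
  have key : (y + 1) * (10 ^ (r + 1) * y + x + 1) = (x + 1) * (10 ^ (s + 1) * x + y + 1) ↔
      10 ^ (r + 1) * (y * (y + 1)) = 10 ^ (s + 1) * (x * (x + 1)) := by
    constructor <;> intro h <;> nlinarith [h]
  rw [key]
  constructor
  · intro h
    have hsr : s < r := by
      by_contra hc
      push_neg at hc
      have h10 : (10:ℕ) ^ (r + 1) ≤ 10 ^ (s + 1) :=
        Nat.pow_le_pow_right (by norm_num) (by omega)
      have hlt : y * (y + 1) < x * (x + 1) := by nlinarith
      have hpos : 0 < (10:ℕ) ^ (s + 1) := pow_pos (by norm_num) _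
      nlinarith [Nat.mul_le_mul h10 (le_refl (y * (y + 1)))]
    have hle : r ≤ s + 1 := by
      by_contra hc
      push_neg at hc
      set Q := 10 ^ (r - s) with hQdef
      set P := 10 ^ s with hPdef
      have hQ : 100 ≤ Q := by
        calc (100:ℕ) = 10 ^ 2 := by norm_num
        _ ≤ Q := Nat.pow_le_pow_right (by norm_num) (by omega)
      have hrP : (10:ℕ) ^ r = P * Q := by
        rw [hQdef, hPdef, ← pow_add]; congr 1; omega
      have hr1P : (10:ℕ) ^ (r + 1) = 10 ^ (s + 1) * Q := by
        rw [hQdef, ← pow_add]; congr 1; omega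
      have heq : Q * (y * (y + 1)) = x * (x + 1) := by
        apply Nat.eq_of_mul_eq_mul_left (show 0 < (10:ℕ) ^ (s + 1) from pow_pos (by norm_num) _)
        rw [← h, hr1P]; ring
      have b1 : P * Q ≤ x + 1 := by rw [← hrP]; exact hx1
      have b2 : x + 1 < 10 * (P * Q) := by
        rw [← hrP]
        calc x + 1 < 10 ^ (r + 1) := hx2
        _ = 10 * 10 ^ r := by ring
      have b3 : y + 1 < 10 * P := by
        calc y + 1 < 10 ^ (s + 1) := hy2
        _ = 10 * P := by rw [hPdef]; ring
      have hP : 1 ≤ P := Nat.one_le_pow _ _ (by norm_num)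
      have hPp : (0:ℤ) < (P:ℤ) := by exact_mod_cast hP
      have hQZ : (100:ℤ) ≤ (Q:ℤ) := by exact_mod_cast hQ
      have b1' : (P:ℤ) * Q ≤ (x:ℤ) + 1 := by exact_mod_cast b1
      have b2' : ((x:ℤ) + 1) < 10 * ((P:ℤ) * Q) := by exact_mod_cast b2
      have b3' : ((y:ℤ) + 1) < 10 * (P:ℤ) := by exact_mod_cast b3
      have heq' : (Q:ℤ) * ((y:ℤ) * (y + 1)) = (x:ℤ) * (x + 1) := by exact_mod_cast heq
      have hy0 : (0:ℤ) ≤ (y:ℤ) := by positivity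
      have t1 : ((P:ℤ) * Q) * ((P:ℤ) * Q) ≤ ((x:ℤ) + 1) * ((x:ℤ) + 1) :=
        mul_le_mul b1' b1' (by positivity) (by positivity)
      have t2 : (y:ℤ) * ((y:ℤ) + 1) ≤ (10 * (P:ℤ) - 2) * (10 * (P:ℤ) - 1) :=
        mul_le_mul (by linarith) (by linarith) (by linarith) (by linarith)
      have t3 : (Q:ℤ) * ((y:ℤ) * ((y:ℤ) + 1)) ≤ (Q:ℤ) * ((10 * (P:ℤ) - 2) * (10 * (P:ℤ) - 1)) :=
        mul_le_mul_of_nonneg_left t2 (by linarith)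
      have t4 : (0:ℤ) ≤ ((Q:ℤ) - 100) * ((P:ℤ) ^ 2 * (Q:ℤ)) :=
        mul_nonneg (by linarith) (by positivity)
      have t5 : (0:ℤ) ≤ ((P:ℤ) - 1) * (Q:ℤ) :=
        mul_nonneg (by linarith) (by linarith)
      nlinarith [t1, t3, t4, t5, heq', b2']
    have hr1 : r = s + 1 := by omega
    refine ⟨?_, hr1⟩
    rw [hr1] at h
    have h2 : 10 ^ (s + 1) * (10 * (y * (y + 1))) = 10 ^ (s + 1) * (x * (x + 1)) := by
      rw [← h]; ring
    have := Nat.eq_of_mul_eq_mul_left (pow_pos (by norm_num) (s + 1)) h2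
    omega
  · rintro ⟨h1, h2⟩
    subst h2
    rw [h1]
    ring
end

section
/- In ℤ[√10], the square of the ideal P₁ = ⟨3, 1+√10⟩ is the principal ideal generated by 1+√10, and the square of P₂ = ⟨3, 1−√10⟩ is the principal ideal generated by 1−√10. -/
open Ideal

lemma key (u : Zsqrtd 10) (h : u * u = 2 * u + 9) :
    (Ideal.span {(3 : Zsqrtd 10), u}) ^ 2 = Ideal.span {u} := by
  have h3 : (3 : Zsqrtd 10) ∈ Ideal.span {(3 : Zsqrtd 10), u} :=
    Ideal.subset_span (Set.mem_insert _ _)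
  have hu : u ∈ Ideal.span {(3 : Zsqrtd 10), u} :=
    Ideal.subset_span (Set.mem_insert_of_mem _ rfl)
  apply le_antisymm
  · rw [pow_two]
    refine Ideal.mul_le.mpr ?_
    intro x hx y hy
    rw [Ideal.mem_span_pair] at hx hy
    obtain ⟨m, n, rfl⟩ := hx
    obtain ⟨m', n', rfl⟩ := hy
    rw [Ideal.mem_span_singleton']
    exact ⟨(u - 2) * m * m' + 3 * m * n' + 3 * n * m' + n * n' * u,
      by linear_combination m * m' * h⟩
  · rw [Ideal.span_le, Set.singleton_subset_iff]
    have hrep : u = 3 * 3 + (3 * u - u * u) := by linear_combination h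
    have hmem : 3 * 3 + (3 * u - u * u) ∈
        Ideal.span {(3 : Zsqrtd 10), u} * Ideal.span {(3 : Zsqrtd 10), u} :=
      add_mem (Ideal.mul_mem_mul h3 h3)
        (sub_mem (Ideal.mul_mem_mul h3 hu) (Ideal.mul_mem_mul hu hu))
    rw [← hrep] at hmem
    rw [pow_two]
    exact hmem

theorem stmt4 :
    (Ideal.span {(3 : Zsqrtd 10), 1 + Zsqrtd.sqrtd}) ^ 2 =
        Ideal.span {1 + Zsqrtd.sqrtd} ∧
    (Ideal.span {(3 : Zsqrtd 10), 1 - Zsqrtd.sqrtd}) ^ 2 =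
        Ideal.span {1 - Zsqrtd.sqrtd} := by
  constructor <;> apply key <;>
    · ext <;> simp [Zsqrtd.ext_iff, Zsqrtd.re_mul, Zsqrtd.im_mul]
end

section
/- If integers a, b satisfy (a + b√10)(a − b√10) generating the ideal ⟨9⟩ in ℤ[√10] (equivalently a² − 10b² = ±9), then a + b√10 equals 3u, (1−√10)u, or (1+√10)u for some unit u of ℤ[√10]. -/
lemma zmod9_claim : ∀ x y : ZMod 9, x ^ 2 = y ^ 2 → 3 * x = 0 ∨ x = y ∨ x = -y := by
  decide

lemma unit_of_norm (w : Zsqrtd 10) (h : w.norm = 1 ∨ w.norm = -1) :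
    ∃ u : (Zsqrtd 10)ˣ, (u : Zsqrtd 10) = w := by
  have : IsUnit w := by
    rw [Zsqrtd.isUnit_iff_norm_isUnit, Int.isUnit_iff]
    rcases h with h | h <;> simp [h]
  exact this

theorem stmt5 (a b : ℤ) (h : a ^ 2 - 10 * b ^ 2 = 9 ∨ a ^ 2 - 10 * b ^ 2 = -9) :
    ∃ u : (Zsqrtd 10)ˣ,
      (⟨a, b⟩ : Zsqrtd 10) = 3 * (u : Zsqrtd 10) ∨
      (⟨a, b⟩ : Zsqrtd 10) = (1 - Zsqrtd.sqrtd) * (u : Zsqrtd 10) ∨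
      (⟨a, b⟩ : Zsqrtd 10) = (1 + Zsqrtd.sqrtd) * (u : Zsqrtd 10) := by
  have hprime : Prime (3 : ℤ) := by norm_num
  by_cases h3 : (3 : ℤ) ∣ a
  · -- then 3 ∣ b as well
    obtain ⟨p, hp⟩ := h3
    subst hp
    have hb3 : (3 : ℤ) ∣ b := by
      have h1 : (3 : ℤ) ∣ 10 * b ^ 2 := by
        rcases h with h | h
        · exact ⟨3 * p ^ 2 - 3, by linarith⟩
        · exact ⟨3 * p ^ 2 + 3, by linarith⟩
      have h2 : (3 : ℤ) ∣ b ^ 2 :=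
        (hprime.dvd_mul.1 h1).resolve_left (by norm_num)
      exact hprime.dvd_of_dvd_pow h2
    obtain ⟨q, hq⟩ := hb3
    subst hq
    have hn : Zsqrtd.norm (⟨p, q⟩ : Zsqrtd 10) = 1 ∨ Zsqrtd.norm (⟨p, q⟩ : Zsqrtd 10) = -1 := by
      simp only [Zsqrtd.norm]
      rcases h with h | h
      · left
        have h9 : 9 * (p * p - 10 * q * q) = 9 := by linear_combination h
        linarith
      · right
        have h9 : 9 * (p * p - 10 * q * q) = -9 := by linear_combination h
        linarith
    obtain ⟨u, hu⟩ := unit_of_norm _ hn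
    refine ⟨u, Or.inl ?_⟩
    rw [hu]
    ext <;> simp [Zsqrtd.ext_iff] <;> ring
  · -- 3 ∤ a, so work mod 9
    have h9' : ((a : ZMod 9)) ^ 2 - 10 * ((b : ZMod 9)) ^ 2 = 0 := by
      have h0 : ((a ^ 2 - 10 * b ^ 2 : ℤ) : ZMod 9) = 0 := by
        rcases h with h | h <;> rw [h] <;> decide
      push_cast at h0
      linear_combination h0
    have hcast : ((a : ZMod 9)) ^ 2 = ((b : ZMod 9)) ^ 2 := by
      have h10 : (10 : ZMod 9) = 1 := by decide
      rw [h10] at h9'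
      linear_combination h9'
    rcases zmod9_claim _ _ hcast with hc | hc | hc
    · exfalso
      apply h3
      have hz : ((3 * a : ℤ) : ZMod 9) = 0 := by push_cast; exact hc
      rw [ZMod.intCast_zmod_eq_zero_iff_dvd] at hz
      omega
    · -- a ≡ b mod 9 : factor as (1+√10) * unit
      have hd : (9 : ℤ) ∣ a - b := by
        have := (ZMod.intCast_eq_intCast_iff _ _ _).1 hc
        exact Int.ModEq.dvd this.symm
      obtain ⟨k, hk⟩ := hd
      have hn : Zsqrtd.norm (⟨b - k, k⟩ : Zsqrtd 10) = 1 ∨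
          Zsqrtd.norm (⟨b - k, k⟩ : Zsqrtd 10) = -1 := by
        simp only [Zsqrtd.norm]
        rcases h with h | h
        · right
          have h9 : 9 * ((b - k) * (b - k) - 10 * k * k) = -9 := by
            linear_combination (a + b + 9 * k) * hk - h
          linarith
        · left
          have h9 : 9 * ((b - k) * (b - k) - 10 * k * k) = 9 := by
            linear_combination (a + b + 9 * k) * hk - h
          linarith
      obtain ⟨u, hu⟩ := unit_of_norm _ hn
      refine ⟨u, Or.inr (Or.inr ?_)⟩
      rw [hu]
      ext <;> simp [Zsqrtd.ext_iff, Zsqrtd.sqrtd] <;> omega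
    · -- a ≡ -b mod 9 : factor as (1-√10) * unit
      have hd : (9 : ℤ) ∣ a + b := by
        have h1 := (ZMod.intCast_eq_intCast_iff a (-b) 9).1 (by push_cast; exact hc)
        have h2 := Int.ModEq.dvd h1.symm
        omega
      obtain ⟨k, hk⟩ := hd
      have hn : Zsqrtd.norm (⟨-k - b, -k⟩ : Zsqrtd 10) = 1 ∨
          Zsqrtd.norm (⟨-k - b, -k⟩ : Zsqrtd 10) = -1 := by
        simp only [Zsqrtd.norm]
        rcases h with h | h
        · right
          have h9 : 9 * ((-k - b) * (-k - b) - 10 * (-k) * (-k)) = -9 := by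
            linear_combination (a - b + 9 * k) * hk - h
          linarith
        · left
          have h9 : 9 * ((-k - b) * (-k - b) - 10 * (-k) * (-k)) = 9 := by
            linear_combination (a - b + 9 * k) * hk - h
          linarith
      obtain ⟨u, hu⟩ := unit_of_norm _ hn
      refine ⟨u, Or.inr (Or.inl ?_)⟩
      rw [hu]
      ext <;> simp [Zsqrtd.ext_iff, Zsqrtd.sqrtd] <;> omega
end

section
/- The group of units of ℤ[√10] is {±1} × ⟨ε⟩ where ε = 3 + √10 is the fundamental unit, and N(ε) = −1. -/
/-- The fundamental unit `ε = 3 + √10` of `ℤ[√10]`, with inverse `-3 + √10`. -/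
def eps10 : (Zsqrtd 10)ˣ :=
  ⟨⟨3, 1⟩, ⟨-3, 1⟩, by decide, by decide⟩

def fsol : Pell.Solution₁ 10 := Pell.Solution₁.mk 19 6 (by norm_num)

lemma fsol_fund : Pell.IsFundamental fsol := by
  refine ⟨by norm_num [fsol, Pell.Solution₁.x_mk], by norm_num [fsol, Pell.Solution₁.y_mk], ?_⟩
  intro b hb
  rw [show fsol.x = 19 from rfl]
  by_contra hc
  push_neg at hc
  obtain ⟨x, y, e, hx1, hx2⟩ : ∃ x y : ℤ, x*x - 10*(y*y) = 1 ∧ 1 < x ∧ x ≤ 18 :=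
    ⟨b.x, b.y, by linear_combination b.prop, hb, by omega⟩
  have hy1 : -6 ≤ y := by nlinarith
  have hy2 : y ≤ 6 := by nlinarith
  interval_cases x <;> interval_cases y <;> omega

def toU : Pell.Solution₁ 10 →* (Zsqrtd 10)ˣ := Unitary.toUnits

lemma toU_val (s : Pell.Solution₁ 10) : (toU s : Zsqrtd 10) = (s : Zsqrtd 10) := rfl

lemma toU_fsol : toU fsol = eps10 ^ 2 := by
  ext <;> rfl

lemma toU_neg (s : Pell.Solution₁ 10) : toU (-s) = -(toU s) := by
  ext <;> rfl

abbrev mapu : ℤˣ →* (Zsqrtd 10)ˣ := Units.map (Int.castRingHom (Zsqrtd 10)).toMonoidHom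

lemma mapu_neg_one : mapu (-1) = -1 := by
  ext <;> decide

lemma rep_of_norm_one (u : (Zsqrtd 10)ˣ) (h : Zsqrtd.norm ((u : (Zsqrtd 10)ˣ) : Zsqrtd 10) = 1) :
    ∃ (s : ℤˣ) (n : ℤ), u = mapu s * eps10 ^ (2 * n) := by
  have key : ∀ n : ℤ, (eps10 ^ 2) ^ n = eps10 ^ (2 * n) := by
    intro n
    rw [← zpow_natCast eps10 2, ← zpow_mul]
    norm_num
  set sol : Pell.Solution₁ 10 := ⟨(u : Zsqrtd 10), Zsqrtd.norm_eq_one_iff_mem_unitary.mp h⟩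
    with hsol
  have hu : toU sol = u := Units.ext rfl
  obtain ⟨n, hn | hn⟩ := fsol_fund.eq_zpow_or_neg_zpow sol
  · refine ⟨1, n, ?_⟩
    rw [← hu, hn, map_zpow, toU_fsol, key, map_one, one_mul]
  · refine ⟨-1, n, ?_⟩
    rw [← hu, hn, toU_neg, map_zpow, toU_fsol, key, mapu_neg_one, neg_one_mul]

lemma exists_rep (u : (Zsqrtd 10)ˣ) :
    ∃ p : ℤˣ × ℤ, u = mapu p.1 * eps10 ^ p.2 := by
  have hnu : IsUnit (Zsqrtd.norm ((u : (Zsqrtd 10)ˣ) : Zsqrtd 10)) :=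
    (Zsqrtd.isUnit_iff_norm_isUnit _).mp u.isUnit
  have heps : Zsqrtd.norm ((eps10 : (Zsqrtd 10)ˣ) : Zsqrtd 10) = -1 := by decide
  rcases Int.isUnit_iff.mp hnu with h1 | h1
  · obtain ⟨s, n, hs⟩ := rep_of_norm_one u h1
    exact ⟨(s, 2 * n), hs⟩
  · have h2 : Zsqrtd.norm ((u * eps10 : (Zsqrtd 10)ˣ) : Zsqrtd 10) = 1 := by
      rw [Units.val_mul, Zsqrtd.norm_mul, h1, heps]; norm_num
    obtain ⟨s, n, hs⟩ := rep_of_norm_one (u * eps10) h2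
    refine ⟨(s, 2 * n - 1), ?_⟩
    have : u = (u * eps10) * eps10⁻¹ := by group
    rw [this, hs, mul_assoc, ← zpow_sub_one]

noncomputable def rt : {r : ℝ // r * r = ((10 : ℤ) : ℝ)} :=
  ⟨Real.sqrt 10, by push_cast; exact Real.mul_self_sqrt (by norm_num)⟩

noncomputable def Φ : (Zsqrtd 10)ˣ →* ℝ :=
  (Units.coeHom ℝ).comp (Units.map (Zsqrtd.lift rt).toMonoidHom)

lemma Φ_eps : Φ eps10 = 3 + Real.sqrt 10 := by
  simp [Φ, rt, eps10, Zsqrtd.lift]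

lemma one_lt_Φeps : 1 < Φ eps10 := by
  rw [Φ_eps]
  have := Real.sqrt_nonneg 10
  linarith

lemma Φ_map (s : ℤˣ) : Φ (mapu s) = ((s : ℤ) : ℝ) := by
  simp [Φ, mapu]

theorem stmt6 :
    Zsqrtd.norm ((eps10 : (Zsqrtd 10)ˣ) : Zsqrtd 10) = -1 ∧
    ∀ u : (Zsqrtd 10)ˣ, ∃! p : ℤˣ × ℤ,
      u = Units.map (Int.castRingHom (Zsqrtd 10)).toMonoidHom p.1 * eps10 ^ p.2 := by
  refine ⟨by decide, fun u => ?_⟩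
  obtain ⟨p, hp⟩ := exists_rep u
  refine ⟨p, hp, fun q hq => ?_⟩
  have h : mapu q.1 * eps10 ^ q.2 = mapu p.1 * eps10 ^ p.2 := by rw [← hp, ← hq]
  have hΦ : ((q.1 : ℤ) : ℝ) * Φ eps10 ^ q.2 = ((p.1 : ℤ) : ℝ) * Φ eps10 ^ p.2 := by
    have := congrArg Φ h
    rwa [map_mul, map_mul, map_zpow, map_zpow, Φ_map, Φ_map] at this
  have hE1 : 1 < Φ eps10 := one_lt_Φeps
  have hE0 : 0 < Φ eps10 := by linarith
  have hq2 : (0:ℝ) < Φ eps10 ^ q.2 := zpow_pos hE0 _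
  have hp2 : (0:ℝ) < Φ eps10 ^ p.2 := zpow_pos hE0 _
  have hsign : q.1 = p.1 := by
    rcases Int.units_eq_one_or q.1 with h1 | h1 <;>
      rcases Int.units_eq_one_or p.1 with h2 | h2 <;>
      rw [h1, h2] <;> rw [h1, h2] at hΦ <;> push_cast at hΦ <;> first | rfl | nlinarith
  have hexp : q.2 = p.2 := by
    rw [hsign] at hΦ
    have := mul_left_cancel₀ (a := ((p.1 : ℤ) : ℝ)) ?_ hΦ
    · exact zpow_right_injective₀ hE0 (by linarith) this
    · rcases Int.units_eq_one_or p.1 with h2 | h2 <;> rw [h2] <;> norm_num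
  exact Prod.ext hsign hexp
end

section
/- Define sequences by (x₁,y₁)=(4,1), (x₂,y₂)=(20,6), (x₃,y₃)=(39,12), and x_{n+3}=19x_n+60y_n+39, y_{n+3}=6x_n+19y_n+12. Then for every n ≥ 1, x_n(x_n+1) = 10·y_n(y_n+1). -/
theorem stmt11 (x y : ℕ → ℕ)
    (hx1 : x 1 = 4) (hy1 : y 1 = 1) (hx2 : x 2 = 20) (hy2 : y 2 = 6)
    (hx3 : x 3 = 39) (hy3 : y 3 = 12)
    (hrec : ∀ n ≥ 1, x (n + 3) = 19 * x n + 60 * y n + 39 ∧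
                     y (n + 3) = 6 * x n + 19 * y n + 12) :
    ∀ n ≥ 1, x n * (x n + 1) = 10 * (y n * (y n + 1)) := by
  intro n
  induction n using Nat.strong_induction_on with
  | _ n ih =>
    intro hn
    match n, hn with
    | 1, _ => simp [hx1, hy1]
    | 2, _ => simp [hx2, hy2]
    | 3, _ => simp [hx3, hy3]
    | (k+4), _ =>
      obtain ⟨hx, hy⟩ := hrec (k+1) (by omega)
      have ihk := ih (k+1) (by omega) (by omega)
      have h4 : k+4 = (k+1)+3 := by ring
      rw [h4, hx, hy]
      nlinarith [ihk]
end

section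
/- Every pair of positive integers (x, y) with x(x+1) = 10y(y+1) appears in the sequence defined by (x₁,y₁)=(4,1), (x₂,y₂)=(20,6), (x₃,y₃)=(39,12), x_{n+3}=19x_n+60y_n+39, y_{n+3}=6x_n+19y_n+12. -/
lemma stmt12_aux (x y : ℕ → ℕ)
    (hx1 : x 1 = 4) (hy1 : y 1 = 1) (hx2 : x 2 = 20) (hy2 : y 2 = 6)
    (hx3 : x 3 = 39) (hy3 : y 3 = 12)
    (hrec : ∀ n ≥ 1, x (n + 3) = 19 * x n + 60 * y n + 39 ∧
                     y (n + 3) = 6 * x n + 19 * y n + 12) :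
    ∀ b a : ℕ, 0 < a → 0 < b → a * (a + 1) = 10 * (b * (b + 1)) →
      ∃ n ≥ 1, x n = a ∧ y n = b := by
  intro b
  induction b using Nat.strong_induction_on with
  | _ b IH =>
    intro a ha hb hab
    by_cases hsmall : b ≤ 12
    · have ha39 : a ≤ 39 := by nlinarith
      interval_cases b <;> interval_cases a <;>
        first
          | exact ⟨1, le_refl 1, by omega, by omega⟩
          | exact ⟨2, by norm_num, by omega, by omega⟩
          | exact ⟨3, by norm_num, by omega, by omega⟩
          | omega
    · push_neg at hsmall
      have h1 : 3 * b + 2 ≤ a := by nlinarith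
      have h2 : 6 * a ≤ 19 * b + 5 := by nlinarith
      have h3 : 60 * b + 22 ≤ 19 * a := by nlinarith
      set a2 := 19 * a - 60 * b - 21 with ha2def
      set b2 := 19 * b + 6 - 6 * a with hb2def
      have e1 : 19 * a = 60 * b + 21 + a2 := by omega
      have e2 : 19 * b + 6 = 6 * a + b2 := by omega
      have hb2 : 0 < b2 := by omega
      have hlt : b2 < b := by omega
      have ha2 : 0 < a2 := by omega
      have habz : (a : ℤ) * (a + 1) = 10 * ((b : ℤ) * (b + 1)) := by
        exact_mod_cast hab
      have ha2z : (a2 : ℤ) = 19 * a - 60 * b - 21 := by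
        have := congrArg (Nat.cast : ℕ → ℤ) e1
        push_cast at this
        linarith
      have hb2z : (b2 : ℤ) = 19 * b + 6 - 6 * a := by
        have := congrArg (Nat.cast : ℕ → ℤ) e2
        push_cast at this
        linarith
      have heq : a2 * (a2 + 1) = 10 * (b2 * (b2 + 1)) := by
        zify
        rw [ha2z, hb2z]
        linear_combination habz
      obtain ⟨n, hn1, hxn, hyn⟩ := IH b2 hlt a2 ha2 hb2 heq
      obtain ⟨hr1, hr2⟩ := hrec n hn1
      exact ⟨n + 3, by omega, by omega, by omega⟩

theorem stmt12 (x y : ℕ → ℕ)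
    (hx1 : x 1 = 4) (hy1 : y 1 = 1) (hx2 : x 2 = 20) (hy2 : y 2 = 6)
    (hx3 : x 3 = 39) (hy3 : y 3 = 12)
    (hrec : ∀ n ≥ 1, x (n + 3) = 19 * x n + 60 * y n + 39 ∧
                     y (n + 3) = 6 * x n + 19 * y n + 12)
    (a b : ℕ) (ha : 0 < a) (hb : 0 < b)
    (hab : a * (a + 1) = 10 * (b * (b + 1))) :
    ∃ n ≥ 1, x n = a ∧ y n = b :=
  stmt12_aux x y hx1 hy1 hx2 hy2 hx3 hy3 hrec b a ha hb hab
end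

section
/- With A_k = (x_k/√10 + y_k + (10+√10)/20)/2 for k ∈ {1,2,3} and φ = 19 + 6√10, the solution sequence satisfies x_{3n+k} = ⌊A_k·√10·φⁿ⌋ and y_{3n+k} = ⌊A_k·φⁿ⌋ for all n ≥ 1. -/
/-!
The recurrence is affine with fixed point `(-1/2, -1/2)`; after shifting by `1/2`, it acts on
`(X, Y)` by the matrix `[[19, 60], [6, 19]]`, which multiplies `X + s Y` by `19 + 6 s` for both
square roots `s = ±√10`. Hence `x (3n+k) + 1/2` and `√10 (y (3n+k) + 1/2)` are half the sum and
half the difference of `P = φⁿ (X_k + √10 Y_k)` and `Q = φ⁻ⁿ (X_k - √10 Y_k)`, while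
`A_k √10 φⁿ = P / 2`. For `k = 1, 2, 3` one checks `|X_k - √10 Y_k| < 1`, so `|Q| < 1` and both
floors are off from `P / 2`, `P / (2√10)` by less than `1/2` in the right direction.
-/

section FloorRing

variable {α : Type*} [Field α] [LinearOrder α] [IsStrictOrderedRing α] [FloorRing α]

theorem Int.floor_eq_of_abs_sub_add_half_lt {r : α} {m : ℤ} (h : |r - (m + 1 / 2)| < 1 / 2) :
    ⌊r⌋ = m := by
  rw [abs_lt] at h
  rw [Int.floor_eq_iff]
  constructor <;> linarith

theorem floor_add_mul_div_eq_of_abs_sub_mul_lt_one {s : α} (hs : 1 ≤ s) {a b : ℕ}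
    (h : |(a + 1 / 2) - s * (b + 1 / 2)| < 1) :
    ⌊((a + 1 / 2) + s * (b + 1 / 2)) / 2⌋ = a ∧
      ⌊((a + 1 / 2) + s * (b + 1 / 2)) / (2 * s)⌋ = b := by
  have hs0 : 0 < 2 * s := by linarith
  constructor
  · refine Int.floor_eq_of_abs_sub_add_half_lt ?_
    rw [show _ - _ = -((a + 1 / 2) - s * (b + 1 / 2)) / 2 by push_cast; ring, abs_div, abs_neg,
      abs_two]
    linarith
  · refine Int.floor_eq_of_abs_sub_add_half_lt ?_
    rw [show _ - _ = ((a + 1 / 2) - s * (b + 1 / 2)) / (2 * s) by push_cast; field_simp; ring,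
      abs_div, abs_of_pos hs0, div_lt_iff₀ hs0]
    linarith

end FloorRing

noncomputable def twistedSum (x y : ℕ → ℕ) (s : ℝ) (n : ℕ) : ℝ := (x n + 1 / 2) + s * (y n + 1 / 2)

section Recurrence

variable {x y : ℕ → ℕ} {s : ℝ}

theorem twistedSum_add_three
    (hrec : ∀ n ≥ 1, x (n + 3) = 19 * x n + 60 * y n + 39 ∧ y (n + 3) = 6 * x n + 19 * y n + 12)
    (hs : s ^ 2 = 10) {m : ℕ} (hm : 1 ≤ m) :
    twistedSum x y s (m + 3) = (19 + 6 * s) * twistedSum x y s m := by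
  obtain ⟨hx, hy⟩ := hrec m hm
  simp only [twistedSum, hx, hy]
  push_cast
  linear_combination (-6 * (y m : ℝ) - 3) * hs

theorem twistedSum_three_mul_add
    (hrec : ∀ n ≥ 1, x (n + 3) = 19 * x n + 60 * y n + 39 ∧ y (n + 3) = 6 * x n + 19 * y n + 12)
    (hs : s ^ 2 = 10) {k : ℕ} (hk : 1 ≤ k) (n : ℕ) :
    twistedSum x y s (3 * n + k) = (19 + 6 * s) ^ n * twistedSum x y s k := by
  induction n with
  | zero => simp
  | succ n ih =>
    rw [show 3 * (n + 1) + k = 3 * n + k + 3 by ring,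
      twistedSum_add_three hrec hs (by omega), ih, pow_succ]
    ring

end Recurrence

theorem floor_eq_of_abs_twistedSum_neg_sqrt_lt {x y : ℕ → ℕ}
    (hrec : ∀ n ≥ 1, x (n + 3) = 19 * x n + 60 * y n + 39 ∧ y (n + 3) = 6 * x n + 19 * y n + 12)
    {k : ℕ} (hk : 1 ≤ k) (hd : |twistedSum x y (-√10) k| < 1) (n : ℕ) :
    (x (3 * n + k) : ℤ) = ⌊twistedSum x y √10 k / 2 * (19 + 6 * √10) ^ n⌋ ∧
      (y (3 * n + k) : ℤ) = ⌊twistedSum x y √10 k / (2 * √10) * (19 + 6 * √10) ^ n⌋ := by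
  have hs : √10 ^ 2 = 10 := Real.sq_sqrt (by norm_num)
  have hs_one : 1 ≤ √10 := by nlinarith [Real.sqrt_nonneg 10]
  have hψ_pos : 0 < 19 + 6 * -√10 := by nlinarith
  have hψ_le : 19 + 6 * -√10 ≤ 1 := by nlinarith
  have hP := twistedSum_three_mul_add hrec hs hk n
  have hQ : |twistedSum x y (-√10) (3 * n + k)| < 1 := by
    rw [twistedSum_three_mul_add hrec (by rwa [neg_sq]) hk n, abs_mul, abs_pow,
      abs_of_pos hψ_pos]
    calc _ ≤ 1 * |twistedSum x y (-√10) k| := by gcongr; exact pow_le_one₀ hψ_pos.le hψ_le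
      _ < 1 := by rwa [one_mul]
  rw [div_mul_eq_mul_div, div_mul_eq_mul_div, mul_comm (twistedSum _ _ _ k), ← hP]
  simp only [twistedSum, neg_mul, ← sub_eq_add_neg] at hQ ⊢
  exact (floor_add_mul_div_eq_of_abs_sub_mul_lt_one hs_one hQ).imp Eq.symm Eq.symm

theorem stmt13 (x y : ℕ → ℕ)
    (hx1 : x 1 = 4) (hy1 : y 1 = 1) (hx2 : x 2 = 20) (hy2 : y 2 = 6)
    (hx3 : x 3 = 39) (hy3 : y 3 = 12)
    (hrec : ∀ n ≥ 1, x (n + 3) = 19 * x n + 60 * y n + 39 ∧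
                     y (n + 3) = 6 * x n + 19 * y n + 12)
    (A : ℕ → ℝ)
    (hA : ∀ k, A k = ((x k : ℝ) / Real.sqrt 10 + (y k : ℝ) + (10 + Real.sqrt 10) / 20) / 2)
    (φ : ℝ) (hφ : φ = 19 + 6 * Real.sqrt 10) :
    ∀ k ∈ ({1, 2, 3} : Set ℕ), ∀ n ≥ 1,
      (x (3 * n + k) : ℤ) = ⌊A k * Real.sqrt 10 * φ ^ n⌋ ∧
      (y (3 * n + k) : ℤ) = ⌊A k * φ ^ n⌋ := by
  intro k hk n _
  have h_lower : 3.1 < √10 := by rw [Real.lt_sqrt (by norm_num)]; norm_num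
  have h_upper : √10 < 3.2 := by rw [Real.sqrt_lt' (by norm_num)]; norm_num
  obtain ⟨hk_pos, hd⟩ : 1 ≤ k ∧ |twistedSum x y (-√10) k| < 1 := by
    rcases hk with rfl | rfl | rfl <;>
      simp only [twistedSum, hx1, hy1, hx2, hy2, hx3, hy3, abs_lt] <;>
      norm_num <;> constructor <;> linarith
  have hA_sqrt : A k * √10 = twistedSum x y √10 k / 2 := by
    rw [hA k, twistedSum]
    field_simp
    linear_combination 2 * Real.sq_sqrt (show (0 : ℝ) ≤ 10 by norm_num)
  have hA' : A k = twistedSum x y √10 k / (2 * √10) := by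
    rw [eq_div_iff (by positivity)]
    linear_combination 2 * hA_sqrt
  rw [hφ, hA_sqrt, hA']
  exact floor_eq_of_abs_twistedSum_neg_sqrt_lt hrec hk_pos hd n
end

section
/- Let (x_n, y_n) be the sequence of all positive solutions of x(x+1)=10y(y+1) (ordered increasingly). Then lim_{n→∞} y_n/x_n = 1/√10. -/
theorem stmt14 (x y : ℕ → ℕ)
    (hx1 : x 1 = 4) (hy1 : y 1 = 1) (hx2 : x 2 = 20) (hy2 : y 2 = 6)
    (hx3 : x 3 = 39) (hy3 : y 3 = 12)
    (hrec : ∀ n ≥ 1, x (n + 3) = 19 * x n + 60 * y n + 39 ∧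
                     y (n + 3) = 6 * x n + 19 * y n + 12) :
    Filter.Tendsto (fun n => (y n : ℝ) / (x n : ℝ)) Filter.atTop
      (nhds (1 / Real.sqrt 10)) := by
  -- Invariant: x n (x n + 1) = 10 y n (y n + 1)
  have inv : ∀ n, 1 ≤ n → (x n : ℤ) * (x n + 1) = 10 * (y n) * ((y n) + 1) := by
    intro n
    induction n using Nat.strong_induction_on with
    | _ n ih =>
      intro hn
      rcases Nat.lt_or_ge n 4 with h4 | h4
      · interval_cases n <;> simp [hx1, hy1, hx2, hy2, hx3, hy3] <;> norm_num
      · obtain ⟨m, rfl⟩ : ∃ m, n = m + 3 := ⟨n - 3, by omega⟩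
        have hm : 1 ≤ m := by omega
        obtain ⟨hxr, hyr⟩ := hrec m hm
        have H := ih m (by omega) hm
        rw [hxr, hyr]
        push_cast
        push_cast at H
        linear_combination H
  -- Growth: x n ≥ n
  have hxge : ∀ n, 1 ≤ n → n ≤ x n := by
    intro n
    induction n using Nat.strong_induction_on with
    | _ n ih =>
      intro hn
      rcases Nat.lt_or_ge n 4 with h4 | h4
      · interval_cases n <;> omega
      · obtain ⟨m, rfl⟩ : ∃ m, n = m + 3 := ⟨n - 3, by omega⟩
        have hm : 1 ≤ m := by omega
        obtain ⟨hxr, _⟩ := hrec m hm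
        have H := ih m (by omega) hm
        omega
  have h10 : (0:ℝ) < Real.sqrt 10 := Real.sqrt_pos.2 (by norm_num)
  have hs : Real.sqrt 10 ^ 2 = 10 := Real.sq_sqrt (by norm_num)
  have hs1 : (1:ℝ) ≤ Real.sqrt 10 := by nlinarith
  rw [tendsto_iff_dist_tendsto_zero]
  refine squeeze_zero' ?_ ?_ (tendsto_const_div_atTop_nhds_zero_nat 10)
  · exact Filter.Eventually.of_forall fun n => dist_nonneg
  · filter_upwards [Filter.eventually_ge_atTop 1] with n hn
    have hXn : (n : ℝ) ≤ (x n : ℝ) := by exact_mod_cast hxge n hn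
    have hinv : (x n : ℝ) * ((x n : ℝ) + 1) = 10 * (y n : ℝ) * ((y n : ℝ) + 1) := by
      exact_mod_cast inv n hn
    set s := Real.sqrt 10
    set X := (x n : ℝ)
    set Y := (y n : ℝ)
    have hn1 : (1:ℝ) ≤ (n:ℝ) := by exact_mod_cast hn
    have hX1 : (1:ℝ) ≤ X := le_trans hn1 hXn
    have hX0 : (0:ℝ) < X := by linarith
    have hY0 : (0:ℝ) ≤ Y := by positivity
    have hYX : Y ≤ X := by nlinarith
    have hss : s * s = 10 := by nlinarith
    have hkey : (s * Y - X) * (s * Y + X) = X - 10 * Y := by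
      linear_combination Y * Y * hss - hinv
    have hsY0 : (0:ℝ) ≤ s * Y := mul_nonneg (by linarith) hY0
    have habs : |Y * s - X * 1| ≤ 10 := by
      rcases abs_cases (Y * s - X * 1) with ⟨h1, h2⟩ | ⟨h1, h2⟩ <;> rw [h1]
      · have hd : (0:ℝ) ≤ s * Y - X := by nlinarith
        nlinarith [mul_nonneg hd hsY0]
      · have hd : (0:ℝ) ≤ X - s * Y := by nlinarith
        nlinarith [mul_nonneg hd hsY0]
    rw [Real.dist_eq]
    have hrw : Y / X - 1 / s = (Y * s - X * 1) / (X * s) :=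
      div_sub_div Y 1 hX0.ne' h10.ne'
    rw [hrw, abs_div, abs_of_pos (by positivity : (0:ℝ) < X * s)]
    rw [div_le_div_iff₀ (by positivity) (by positivity : (0:ℝ) < (n:ℝ))]
    calc |Y * s - X * 1| * (n:ℝ) ≤ 10 * (n:ℝ) :=
          mul_le_mul_of_nonneg_right habs (by positivity)
      _ ≤ 10 * X := by linarith
      _ ≤ 10 * (X * s) := by nlinarith [mul_le_mul_of_nonneg_left hs1 hX0.le]
end

section
/- For the sequence (x_n, y_n) of positive solutions of x(x+1)=10y(y+1), the sequence y_n/x_n is strictly increasing; equivalently x_n·y_{n+1} − x_{n+1}·y_n > 0 for all n ≥ 1. -/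
theorem stmt15 (x y : ℕ → ℕ)
    (hx1 : x 1 = 4) (hy1 : y 1 = 1) (hx2 : x 2 = 20) (hy2 : y 2 = 6)
    (hx3 : x 3 = 39) (hy3 : y 3 = 12)
    (hrec : ∀ n ≥ 1, x (n + 3) = 19 * x n + 60 * y n + 39 ∧
                     y (n + 3) = 6 * x n + 19 * y n + 12) :
    ∀ n ≥ 1, (y n : ℝ) / (x n : ℝ) < (y (n + 1) : ℝ) / (x (n + 1) : ℝ) ∧
      0 < (x n : ℤ) * (y (n + 1) : ℤ) - (x (n + 1) : ℤ) * (y n : ℤ) := by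
  set Q : ℕ → Prop := fun n =>
    0 < x n ∧ x n < x (n+1) ∧ y n < y (n+1) ∧ x (n+1) * y n < x n * y (n+1) with hQ
  have step : ∀ n, 1 ≤ n → Q n → Q (n + 3) := by
    intro n hn ⟨hp, hxm, hym, hc⟩
    obtain ⟨e1, e2⟩ := hrec n hn
    obtain ⟨e3, e4⟩ := hrec (n+1) (by omega)
    simp only [show n+1+3 = n+4 from by omega] at e3 e4
    refine ⟨?_, ?_, ?_, ?_⟩
    · rw [e1]; omega
    · simp only [show n+3+1 = n+4 from by omega]
      rw [e1, e3]; omega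
    · simp only [show n+3+1 = n+4 from by omega]
      rw [e2, e4]; omega
    · simp only [show n+3+1 = n+4 from by omega]
      rw [e1, e2, e3, e4]
      nlinarith [hc, hxm, hym]
  have aux : ∀ m : ℕ, Q (m+1) ∧ Q (m+2) ∧ Q (m+3) := by
    intro m
    induction m with
    | zero =>
      obtain ⟨e1, e2⟩ := hrec 1 (le_refl 1)
      rw [hx1, hy1] at e1 e2
      norm_num at e1 e2
      refine ⟨⟨?_, ?_, ?_, ?_⟩, ⟨?_, ?_, ?_, ?_⟩, ⟨?_, ?_, ?_, ?_⟩⟩ <;>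
        simp [hx1, hy1, hx2, hy2, hx3, hy3, e1, e2]
    | succ m ih =>
      obtain ⟨q1, q2, q3⟩ := ih
      exact ⟨q2, q3, step (m+1) (by omega) q1⟩
  have main : ∀ n, 1 ≤ n → Q n := by
    intro n hn
    rw [show n = (n-1)+1 from by omega]
    exact (aux (n-1)).1
  intro n hn
  obtain ⟨hp, hxm, hym, hc⟩ := main n hn
  constructor
  · rw [div_lt_div_iff₀ (by exact_mod_cast hp) (by exact_mod_cast (hp.trans hxm))]
    exact_mod_cast by nlinarith [hc]
  · exact sub_pos.mpr (by exact_mod_cast hc)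
end

section
/- For the sequence (x_n, y_n) of positive solutions of x(x+1)=10y(y+1), the sequence (y_n+1)/(x_n+1) is strictly decreasing. -/
theorem stmt16 (x y : ℕ → ℕ)
    (hx1 : x 1 = 4) (hy1 : y 1 = 1) (hx2 : x 2 = 20) (hy2 : y 2 = 6)
    (hx3 : x 3 = 39) (hy3 : y 3 = 12)
    (hrec : ∀ n ≥ 1, x (n + 3) = 19 * x n + 60 * y n + 39 ∧
                     y (n + 3) = 6 * x n + 19 * y n + 12) :
    ∀ n ≥ 1, ((y (n + 1) : ℝ) + 1) / ((x (n + 1) : ℝ) + 1) <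
      ((y n : ℝ) + 1) / ((x n : ℝ) + 1) := by
  have key : ∀ n, 1 ≤ n → (x n < x (n + 1) ∧ y n < y (n + 1)) ∧
      ((y (n + 1) : ℤ) + 1) * ((x n : ℤ) + 1) <
        ((y n : ℤ) + 1) * ((x (n + 1) : ℤ) + 1) := by
    intro n
    induction n using Nat.strong_induction_on with
    | _ n ih =>
      match n with
      | 0 => intro h; omega
      | 1 => intro _; norm_num [hx1, hy1, hx2, hy2]
      | 2 => intro _; norm_num [hx2, hy2, hx3, hy3]
      | 3 =>
        intro _
        obtain ⟨hx4, hy4⟩ := hrec 1 (by norm_num)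
        rw [hx1, hy1] at hx4 hy4
        norm_num at hx4 hy4
        norm_num [hx3, hy3, hx4, hy4]
      | (m + 4) =>
        intro _
        obtain ⟨⟨hmx, hmy⟩, hD⟩ := ih (m + 1) (by omega) (by omega)
        obtain ⟨hxa, hya⟩ := hrec (m + 1) (by omega)
        obtain ⟨hxb, hyb⟩ := hrec (m + 2) (by omega)
        rw [show m + 1 + 3 = m + 4 from by omega] at hxa hya
        rw [show m + 2 + 3 = m + 4 + 1 from by omega] at hxb hyb
        rw [show m + 1 + 1 = m + 2 from by omega] at hmx hmy hD
        constructor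
        · constructor <;> omega
        · have e1 : ((x (m + 4) : ℤ)) = 19 * x (m + 1) + 60 * y (m + 1) + 39 := by
            exact_mod_cast congrArg (Nat.cast : ℕ → ℤ) hxa
          have e2 : ((y (m + 4) : ℤ)) = 6 * x (m + 1) + 19 * y (m + 1) + 12 := by
            exact_mod_cast congrArg (Nat.cast : ℕ → ℤ) hya
          have e3 : ((x (m + 4 + 1) : ℤ)) = 19 * x (m + 2) + 60 * y (m + 2) + 39 := by
            exact_mod_cast congrArg (Nat.cast : ℕ → ℤ) hxb
          have e4 : ((y (m + 4 + 1) : ℤ)) = 6 * x (m + 2) + 19 * y (m + 2) + 12 := by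
            exact_mod_cast congrArg (Nat.cast : ℕ → ℤ) hyb
          have hmx' : (x (m + 1) : ℤ) < x (m + 2) := by exact_mod_cast hmx
          have hmy' : (y (m + 1) : ℤ) < y (m + 2) := by exact_mod_cast hmy
          rw [e1, e2, e3, e4]
          nlinarith [hD, hmx', hmy']
  intro n hn
  obtain ⟨_, hD⟩ := key n hn
  rw [div_lt_div_iff₀ (by positivity) (by positivity)]
  exact_mod_cast hD
end

section
/- If positive integers x, y satisfy x(x+1) = 10y(y+1), then x + 1 is not a power of 10 and y + 1 is not a power of 10. -/
/-- Orbit of the Pell solutions (u,v), u²+9=10v², modulo 148. -/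
def pellS : List (ℕ × ℕ) :=
  [(1, 1), (1, 73), (9, 3), (9, 71), (41, 13), (41, 61), (55, 111), (69, 25), (69, 49),
   (79, 25), (79, 49), (93, 111), (107, 13), (107, 61), (139, 3), (139, 71), (147, 1), (147, 73)]

lemma pellS_closed : ∀ p ∈ pellS,
    ((19 * p.1 + 60 * p.2) % 148, (6 * p.1 + 19 * p.2) % 148) ∈ pellS := by decide

lemma pell_small : ∀ u : Fin 57, ∀ v : Fin 19,
    (u : ℕ) * u + 9 = 10 * ((v : ℕ) * v) → ((u : ℕ) % 148, (v : ℕ) % 148) ∈ pellS := by decide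

lemma pell_mem : ∀ u v : ℕ, u * u + 9 = 10 * (v * v) → (u % 148, v % 148) ∈ pellS := by
  intro u
  induction u using Nat.strong_induction_on with
  | _ u ih =>
    intro v h
    by_cases hu : u < 57
    · have hv : v < 19 := by nlinarith
      exact pell_small ⟨u, hu⟩ ⟨v, hv⟩ h
    · push_neg at hu
      have hv1 : 1 ≤ v := by nlinarith
      have h60 : 60 * v ≤ 19 * u := by nlinarith
      have h6 : 6 * u ≤ 19 * v := by nlinarith
      set a := 19 * u - 60 * v with ha
      set b := 19 * v - 6 * u with hb
      have haz : (a : ℤ) = 19 * u - 60 * v := by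
        simp [ha]; omega
      have hbz : (b : ℤ) = 19 * v - 6 * u := by
        simp [hb]; omega
      have hz : (u : ℤ) * u + 9 = 10 * ((v : ℤ) * v) := by exact_mod_cast h
      have hab : a * a + 9 = 10 * (b * b) := by
        have : (a : ℤ) * a + 9 = 10 * ((b : ℤ) * b) := by
          rw [haz, hbz]; linear_combination 361 * hz - 360 * hz
        exact_mod_cast this
      have hlt : a < u := by
        have : a * a < u * u := by nlinarith
        nlinarith
      have hmem := ih a hlt b hab
      have hrecu : u = 19 * a + 60 * b := by omega
      have hrecv : v = 6 * a + 19 * b := by omega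
      have e1 : u % 148 = (19 * (a % 148) + 60 * (b % 148)) % 148 := by
        rw [hrecu]; conv_lhs => rw [Nat.add_mod, Nat.mul_mod, Nat.mul_mod 60]
        simp [Nat.add_mod, Nat.mul_mod]
      have e2 : v % 148 = (6 * (a % 148) + 19 * (b % 148)) % 148 := by
        rw [hrecv]; conv_lhs => rw [Nat.add_mod, Nat.mul_mod, Nat.mul_mod 19]
        simp [Nat.add_mod, Nat.mul_mod]
      rw [e1, e2]
      exact pellS_closed (a % 148, b % 148) hmem

lemma pow10_mod : ∀ k : ℕ, 10 ^ (k + 1) % 148 = 10 ∨ 10 ^ (k + 1) % 148 = 100 ∨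
    10 ^ (k + 1) % 148 = 112 ∨ 10 ^ (k + 1) % 148 = 84 := by
  intro k
  induction k with
  | zero => norm_num
  | succ n ih =>
    have e : 10 ^ (n + 2) % 148 = 10 * (10 ^ (n + 1) % 148) % 148 := by
      rw [pow_succ', Nat.mul_mod]
    rcases ih with h | h | h | h <;> rw [e, h] <;> norm_num

lemma pellS_first : ∀ p ∈ pellS, p.1 ≠ 19 ∧ p.1 ≠ 51 ∧ p.1 ≠ 75 := by decide

lemma pellS_second : ∀ p ∈ pellS, p.2 ≠ 19 ∧ p.2 ≠ 51 ∧ p.2 ≠ 75 := by decide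

theorem stmt17 (x y : ℕ) (hx : 0 < x) (hy : 0 < y)
    (h : x * (x + 1) = 10 * (y * (y + 1))) :
    (∀ k : ℕ, x + 1 ≠ 10 ^ k) ∧ (∀ k : ℕ, y + 1 ≠ 10 ^ k) := by
  have hz : (x : ℤ) * (x + 1) = 10 * ((y : ℤ) * (y + 1)) := by exact_mod_cast h
  have key : (2 * x + 1) * (2 * x + 1) + 9 = 10 * ((2 * y + 1) * (2 * y + 1)) := by
    have : ((2 * x + 1 : ℕ) : ℤ) * ((2 * x + 1 : ℕ) : ℤ) + 9 =
        10 * (((2 * y + 1 : ℕ) : ℤ) * ((2 * y + 1 : ℕ) : ℤ)) := by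
      push_cast; linear_combination 4 * hz
    exact_mod_cast this
  have hmem := pell_mem (2 * x + 1) (2 * y + 1) key
  constructor
  · intro k hk
    match k with
    | 0 => simp at hk; omega
    | Nat.succ j =>
      have hp := pow10_mod j
      have hu : (2 * x + 1) % 148 = 19 ∨ (2 * x + 1) % 148 = 51 ∨
          (2 * x + 1) % 148 = 75 := by omega
      have := pellS_first ((2 * x + 1) % 148, (2 * y + 1) % 148) hmem
      simp at this; omega
  · intro k hk
    match k with
    | 0 => simp at hk; omega
    | Nat.succ j =>
      have hp := pow10_mod j
      have hv : (2 * y + 1) % 148 = 19 ∨ (2 * y + 1) % 148 = 51 ∨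
          (2 * y + 1) % 148 = 75 := by omega
      have := pellS_second ((2 * x + 1) % 148, (2 * y + 1) % 148) hmem
      simp at this; omega
end

section
/- There are infinitely many pairs of positive integers (x, y) with x(x+1) = 10y(y+1) such that x has exactly one more decimal digit than y. In particular, there are infinitely many solutions x > y ≥ 1 of (y+1)/(x+1) = (x∘(y+1))/(y∘(x+1)), where ∘ denotes decimal concatenation. -/
/-- Decimal concatenation of two positive integers: `a ∘ b = 10 ^ (⌊log₁₀ b⌋ + 1) * a + b`. -/
def concat10 (a b : ℕ) : ℕ := 10 ^ (Nat.log 10 b + 1) * a + b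

/-! Auxiliary development: the solution sequence of `x(x+1) = 10 y(y+1)` starting at `(20, 6)`. -/

private def pell : ℕ → ℕ × ℕ
  | 0 => (20, 6)
  | n + 1 => (19 * (pell n).1 + 60 * (pell n).2 + 39,
              6 * (pell n).1 + 19 * (pell n).2 + 12)

private lemma pell_fst_succ (n : ℕ) :
    (pell (n+1)).1 = 19 * (pell n).1 + 60 * (pell n).2 + 39 := rfl

private lemma pell_snd_succ (n : ℕ) :
    (pell (n+1)).2 = 6 * (pell n).1 + 19 * (pell n).2 + 12 := rfl

private lemma pell_eq : ∀ n, (pell n).1 * ((pell n).1 + 1) = 10 * ((pell n).2 * ((pell n).2 + 1))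
  | 0 => by norm_num [pell]
  | n + 1 => by
      have h := pell_eq n
      rw [pell_fst_succ, pell_snd_succ]
      zify at h ⊢
      linear_combination h

private lemma pell_fst_ge : ∀ n, 20 ≤ (pell n).1
  | 0 => le_refl _
  | n + 1 => by rw [pell_fst_succ]; omega

private lemma pell_snd_pos : ∀ n, 1 ≤ (pell n).2
  | 0 => by norm_num [pell]
  | n + 1 => by rw [pell_snd_succ]; omega

private lemma pell_snd_even : ∀ n, 2 ∣ (pell n).2
  | 0 => by norm_num [pell]
  | n + 1 => by rw [pell_snd_succ]; have := pell_snd_even n; omega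

private lemma pell_snd_ge100 (n : ℕ) : 100 ≤ (pell (n+1)).2 := by
  rw [pell_snd_succ]
  have := pell_fst_ge n
  omega

private lemma pell_b1 (n : ℕ) : 31 * (pell n).2 ≤ 10 * (pell n).1 := by
  nlinarith [pell_eq n, pell_snd_pos n, sq_nonneg ((pell n).1 + (pell n).2)]

private lemma pell_b2 (n : ℕ) : 5 * (pell n).1 ≤ 16 * (pell n).2 + 16 := by
  nlinarith [pell_eq n, pell_snd_pos n]

private lemma pell_stepl (n : ℕ) : 604 * (pell n).1 ≤ 16 * (pell (n+1)).1 + 336 := by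
  rw [pell_fst_succ]; linarith [pell_b2 n]

private lemma pell_stepu (n : ℕ) : 31 * (pell (n+1)).1 ≤ 1189 * (pell n).1 + 1209 := by
  rw [pell_fst_succ]; linarith [pell_b1 n]

private lemma pell_fst_lt (n : ℕ) : (pell n).1 < (pell (n+1)).1 := by
  rw [pell_fst_succ]; omega

/-- "good" index: x has exactly one more digit than y. -/
private def pgood (n : ℕ) : Prop :=
  Nat.log 10 (pell n).1 = Nat.log 10 (pell n).2 + 1

private lemma pell_dich (n : ℕ) :
    Nat.log 10 (pell n).1 = Nat.log 10 (pell n).2 ∨ pgood n := by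
  have h1 := pell_b1 n
  have h2 := pell_b2 n
  have hy := pell_snd_pos n
  have hyx : (pell n).2 ≤ (pell n).1 := by omega
  have hl : Nat.log 10 (pell n).2 ≤ Nat.log 10 (pell n).1 := Nat.log_mono_right hyx
  have hx10 : (pell n).1 ≤ (pell n).2 * 10 := by omega
  have hu : Nat.log 10 (pell n).1 ≤ Nat.log 10 (pell n).2 + 1 := by
    have := Nat.log_mono_right (b := 10) hx10
    rwa [Nat.log_mul_base (by norm_num) (by omega)] at this
  unfold pgood
  omega

private lemma pell_key3 (n : ℕ) : pgood (n+1) ∨ pgood (n+2) ∨ pgood (n+3) := by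
  by_contra hcon
  push_neg at hcon
  obtain ⟨hg1, hg2, hg3⟩ := hcon
  have hb1 := (pell_dich (n+1)).resolve_right hg1
  have hb2 := (pell_dich (n+2)).resolve_right hg2
  have hb3 := (pell_dich (n+3)).resolve_right hg3
  set m := n + 1 with hm
  set k := Nat.log 10 (pell m).1 with hk
  set P : ℕ := 10 ^ k with hPdef
  -- basic facts at m
  have hy0 : (pell m).2 ≠ 0 := by have := pell_snd_pos m; omega
  have hx0 : (pell m).1 ≠ 0 := by have := pell_fst_ge m; omega
  have hyP : P ≤ (pell m).2 := by
    rw [hPdef, hb1]; exact Nat.pow_log_le_self 10 hy0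
  have hxub : (pell m).1 < 10 * P := by
    have := Nat.lt_pow_succ_log_self (b := 10) (by norm_num) (pell m).1
    rwa [← hk, pow_succ, Nat.mul_comm] at this
  have hk2 : 2 ≤ k := by
    rw [hb1]
    exact Nat.le_log_of_pow_le (by norm_num)
      (by simpa using pell_snd_ge100 n)
  have hP : 100 ≤ P := by
    calc (100 : ℕ) = 10 ^ 2 := by norm_num
    _ ≤ 10 ^ k := Nat.pow_le_pow_right (by norm_num) hk2
  -- x_m is large: 31P ≤ 10 x_m
  have hxl : 31 * P ≤ 10 * (pell m).1 := le_trans (by linarith [pell_b1 m]) (pell_b1 m)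
  -- bounds on x_{m+1}
  have ha'l : 100 * P ≤ (pell (m+1)).1 := by
    have s := pell_stepl m
    linarith
  have ha'u : 31 * (pell (m+1)).1 ≤ 11903 * P := by
    have s := pell_stepu m
    linarith
  have ha'lt : (pell (m+1)).1 < 1000 * P := by linarith
  have hloga' : Nat.log 10 (pell (m+1)).1 = k + 2 := by
    apply Nat.log_eq_of_pow_le_of_lt_pow
    · have e : (10:ℕ) ^ (k+2) = 100 * P := by rw [hPdef]; ring
      rw [e]; exact ha'l
    · have e : (10:ℕ) ^ (k+2+1) = 1000 * P := by rw [hPdef]; ring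
      rw [e]; exact ha'lt
  -- bad at m+1 forces y_{m+1} ≥ 100 P
  have hy'P : 100 * P ≤ (pell (m+1)).2 := by
    have hy0' : (pell (m+1)).2 ≠ 0 := by have := pell_snd_pos (m+1); omega
    have := Nat.pow_log_le_self 10 hy0'
    rw [← hb2, hloga'] at this
    have e : (10:ℕ) ^ (k+2) = 100 * P := by rw [hPdef]; ring
    rwa [e] at this
  have hx'l : 3100 * P ≤ 10 * (pell (m+1)).1 := by
    have := pell_b1 (m+1); linarith
  -- bounds on x_{m+2}
  have ha''l : 10000 * P ≤ (pell (m+2)).1 := by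
    have s := pell_stepl (m+1)
    linarith
  have ha''u : 961 * (pell (m+2)).1 ≤ 14153042 * P := by
    have s := pell_stepu (m+1)
    linarith
  have ha''lt : (pell (m+2)).1 < 100000 * P := by linarith
  have hloga'' : Nat.log 10 (pell (m+2)).1 = k + 4 := by
    apply Nat.log_eq_of_pow_le_of_lt_pow
    · have e : (10:ℕ) ^ (k+4) = 10000 * P := by rw [hPdef]; ring
      rw [e]; exact ha''l
    · have e : (10:ℕ) ^ (k+4+1) = 100000 * P := by rw [hPdef]; ring
      rw [e]; exact ha''lt
  -- bad at m+2 forces y_{m+2} ≥ 10000 P, contradiction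
  have hy''P : 10000 * P ≤ (pell (m+2)).2 := by
    have hy0'' : (pell (m+2)).2 ≠ 0 := by have := pell_snd_pos (m+2); omega
    have := Nat.pow_log_le_self 10 hy0''
    rw [← hb3, hloga''] at this
    have e : (10:ℕ) ^ (k+4) = 10000 * P := by rw [hPdef]; ring
    rwa [e] at this
  have := pell_b1 (m+2)
  linarith

private lemma pell_mem1 (n : ℕ) (hg : pgood n) :
    0 < (pell n).2 ∧ (pell n).1 * ((pell n).1 + 1) = 10 * ((pell n).2 * ((pell n).2 + 1)) ∧
      (Nat.digits 10 (pell n).1).length = (Nat.digits 10 (pell n).2).length + 1 := by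
  have hy := pell_snd_pos n
  have hx := pell_fst_ge n
  refine ⟨by omega, pell_eq n, ?_⟩
  rw [Nat.digits_len 10 _ (by norm_num) (by omega), Nat.digits_len 10 _ (by norm_num) (by omega)]
  unfold pgood at hg
  omega

private lemma pell_mem2 (n : ℕ) (hg : pgood n) :
    1 ≤ (pell n).2 ∧ (pell n).2 < (pell n).1 ∧
      ((pell n).2 + 1) * concat10 (pell n).2 ((pell n).1 + 1) =
        ((pell n).1 + 1) * concat10 (pell n).1 ((pell n).2 + 1) := by
  have hy := pell_snd_pos n
  have hb1 := pell_b1 n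
  have hb2 := pell_b2 n
  refine ⟨hy, by omega, ?_⟩
  set L := Nat.log 10 (pell n).2 with hL
  have hg' : Nat.log 10 (pell n).1 = L + 1 := hg
  have hYlt : (pell n).2 < 10 ^ (L+1) := by
    have := Nat.lt_pow_succ_log_self (b := 10) (by norm_num) (pell n).2
    rwa [← hL] at this
  have h2Y := pell_snd_even n
  have hdv : (2:ℕ) ∣ 10 ^ (L+1) := dvd_pow (by norm_num) (Nat.succ_ne_zero L)
  have hY1 : (pell n).2 + 1 < 10 ^ (L+1) := by omega
  have hYge : 10 ^ L ≤ (pell n).2 := by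
    rw [hL]; exact Nat.pow_log_le_self 10 (by omega)
  have hlogY1 : Nat.log 10 ((pell n).2 + 1) = L :=
    Nat.log_eq_of_pow_le_of_lt_pow (by omega) hY1
  have hXge : 10 ^ (L+1) ≤ (pell n).1 := by
    have := Nat.pow_log_le_self 10 (show (pell n).1 ≠ 0 by have := pell_fst_ge n; omega)
    rwa [hg'] at this
  have hpos : 1 ≤ (10:ℕ) ^ (L+1) := Nat.one_le_pow _ _ (by norm_num)
  have hX1lt : (pell n).1 + 1 < 10 ^ (L+1+1) := by
    have e : (10:ℕ) ^ (L+1+1) = 10 * 10 ^ (L+1) := by ring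
    rw [e]
    linarith
  have hlogX1 : Nat.log 10 ((pell n).1 + 1) = L + 1 :=
    Nat.log_eq_of_pow_le_of_lt_pow (by omega) hX1lt
  unfold concat10
  rw [hlogX1, hlogY1]
  have h := pell_eq n
  zify at h ⊢
  linear_combination (-(10:ℤ)^(L+1)) * h

theorem stmt19 :
    {p : ℕ × ℕ | 0 < p.2 ∧ p.1 * (p.1 + 1) = 10 * (p.2 * (p.2 + 1)) ∧
      (Nat.digits 10 p.1).length = (Nat.digits 10 p.2).length + 1}.Infinite ∧
    {p : ℕ × ℕ | 1 ≤ p.2 ∧ p.2 < p.1 ∧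
      (p.2 + 1) * concat10 p.2 (p.1 + 1) = (p.1 + 1) * concat10 p.1 (p.2 + 1)}.Infinite := by
  have hgood : ∀ m : ℕ, ∃ n, m ≤ n ∧ pgood n := by
    intro m
    rcases pell_key3 m with h | h | h
    · exact ⟨m+1, by omega, h⟩
    · exact ⟨m+2, by omega, h⟩
    · exact ⟨m+3, by omega, h⟩
  -- a strictly increasing sequence of good indices
  let f : ℕ → ℕ := fun k => Nat.rec (hgood 0).choose (fun _ p => (hgood (p+1)).choose) k
  have hf_good : ∀ k, pgood (f k) := by
    intro k
    cases k with
    | zero => exact (hgood 0).choose_spec.2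
    | succ k => exact (hgood (f k + 1)).choose_spec.2
  have hf_lt : ∀ k, f k < f (k+1) := by
    intro k
    exact lt_of_lt_of_le (Nat.lt_succ_self _) (hgood (f k + 1)).choose_spec.1
  have hxmono : StrictMono (fun n => (pell n).1) := strictMono_nat_of_lt_succ pell_fst_lt
  have hfmono : StrictMono f := strictMono_nat_of_lt_succ hf_lt
  have hinj : Function.Injective (fun k => pell (f k)) := by
    intro a b hab
    have : (pell (f a)).1 = (pell (f b)).1 := congrArg Prod.fst hab
    exact (hxmono.comp hfmono).injective this
  constructor
  · exact Set.infinite_of_injective_forall_mem hinj (fun k => pell_mem1 (f k) (hf_good k))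
  · exact Set.infinite_of_injective_forall_mem hinj (fun k => pell_mem2 (f k) (hf_good k))
end
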